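/- For all real numbers x > 0 and y > 0, the integral H_{2,1,1}(x,y) = ∫₀^∞ (u+1)^{-2}(ux+1)^{-1}(uy+1)^{-1} u^{5/2} du converges and equals π(√x(√y + 2)² + x(√y + 2) + 2(√y + 1)²)/(2(√x + 1)² √x (√y + 1)² √y (√x + √y)). -/

import Mathlib

open MeasureTheory Real Filter Set Topology

noncomputable def Gaux (a b : ℝ) : ℝ → ℝ := fun u : ℝ =>
  (u + 1) ^ (-2 : ℤ) * (u * a ^ 2 + 1)⁻¹ * (u * b ^ 2 + 1)⁻¹ * u ^ ((5 : ℝ) / 2)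

noncomputable def Raux (a b : ℝ) : ℝ :=
  Real.pi * (a * (b + 2) ^ 2 + a ^ 2 * (b + 2) + 2 * (b + 1) ^ 2) /
    (2 * (a + 1) ^ 2 * a * (b + 1) ^ 2 * b * (a + b))

private lemma sqrt_tendsto_atTop : Tendsto Real.sqrt atTop atTop := by
  refine tendsto_atTop_atTop.2 fun c => ⟨(max c 0) ^ 2, fun v hv => ?_⟩
  calc c ≤ max c 0 := le_max_left _ _
    _ = Real.sqrt ((max c 0) ^ 2) := (Real.sqrt_sq (le_max_right _ _)).symm
    _ ≤ Real.sqrt v := Real.sqrt_le_sqrt hv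

private lemma tendsto_arctan_mul_sqrt (c : ℝ) (hc : 0 < c) :
    Tendsto (fun v : ℝ => arctan (c * Real.sqrt v)) atTop (𝓝 (π / 2)) := by
  have h1 : Tendsto (fun v : ℝ => c * Real.sqrt v) atTop atTop :=
    sqrt_tendsto_atTop.const_mul_atTop hc
  exact (Real.tendsto_arctan_atTop.mono_right nhdsWithin_le_nhds).comp h1

private lemma tendsto_sqrt_div_linear (c : ℝ) (hc : 0 < c) :
    Tendsto (fun v : ℝ => Real.sqrt v / (c * v + 1)) atTop (𝓝 0) := by
  have h1 : Tendsto (fun v : ℝ => c⁻¹ * (Real.sqrt v)⁻¹) atTop (𝓝 (c⁻¹ * 0)) :=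
    (tendsto_inv_atTop_zero.comp sqrt_tendsto_atTop).const_mul _
  rw [mul_zero] at h1
  refine squeeze_zero' ?_ ?_ h1
  · filter_upwards [eventually_ge_atTop (0:ℝ)] with v hv
    positivity
  · filter_upwards [eventually_gt_atTop (0:ℝ)] with v hv
    have hs : 0 < Real.sqrt v := Real.sqrt_pos.2 hv
    have hvv : Real.sqrt v * Real.sqrt v = v := Real.mul_self_sqrt hv.le
    rw [div_le_iff₀ (by positivity)]
    have h2 : c⁻¹ * (Real.sqrt v)⁻¹ * (c * v + 1) = (c * v + 1) / (c * Real.sqrt v) := by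
      field_simp
    rw [h2, le_div_iff₀ (by positivity)]
    nlinarith [hs]

private lemma tendsto_sqrt_div_pow (k : ℕ) (hk : k ≠ 0) :
    Tendsto (fun v : ℝ => Real.sqrt v / (v + 1) ^ k) atTop (𝓝 0) := by
  have h1 := tendsto_sqrt_div_linear 1 one_pos
  simp only [one_mul] at h1
  refine squeeze_zero' ?_ ?_ h1
  · filter_upwards [eventually_ge_atTop (0:ℝ)] with v hv
    positivity
  · filter_upwards [eventually_ge_atTop (0:ℝ)] with v hv
    have h2 : (0:ℝ) < v + 1 := by linarith
    have h3 : v + 1 ≤ (v + 1) ^ k := le_self_pow₀ (by linarith) hk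
    gcongr

set_option maxHeartbeats 4000000 in
set_option maxRecDepth 20000 in
private lemma engine (a b A B C D E G P : ℝ) (ha : 0 < a) (hb : 0 < b)
    (H : ∀ u : ℝ,
      A*(u+1)^3*(a^2*u+1)^2*(b^2*u+1) + B*(1-u)*(u+1)^2*(a^2*u+1)^2*(b^2*u+1)
      + E*(1-3*u)*(u+1)*(a^2*u+1)^2*(b^2*u+1) + G*(1-5*u)*(a^2*u+1)^2*(b^2*u+1)
      + C*a*(u+1)^4*(a^2*u+1)*(b^2*u+1) + D*b*(u+1)^4*(a^2*u+1)^2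
      + P*(1-a^2*u)*(u+1)^4*(b^2*u+1)
      = 2*u^3*(u+1)^2*(a^2*u+1)) :
    IntegrableOn (Gaux a b) (Ioi 0) ∧
      ∫ u in Ioi (0:ℝ), Gaux a b u = π/2*(A+C+D) := by
  set F : ℝ → ℝ := fun v => A * arctan (Real.sqrt v) + B * (Real.sqrt v / (v+1))
    + E * (Real.sqrt v / (v+1)^2) + G * (Real.sqrt v / (v+1)^3)
    + C * arctan (a * Real.sqrt v) + D * arctan (b * Real.sqrt v)
    + P * (Real.sqrt v / (a^2*v+1)) with hFdef
  -- continuity on [0, ∞)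
  have hcO : ContinuousOn F (Ici 0) := by
    have hne1 : ∀ v ∈ Ici (0:ℝ), v + 1 ≠ 0 := fun v hv => by
      have : (0:ℝ) ≤ v := hv; intro h; linarith
    have hne2 : ∀ v ∈ Ici (0:ℝ), (v + 1) ^ 2 ≠ 0 := fun v hv =>
      pow_ne_zero _ (hne1 v hv)
    have hne3 : ∀ v ∈ Ici (0:ℝ), (v + 1) ^ 3 ≠ 0 := fun v hv =>
      pow_ne_zero _ (hne1 v hv)
    have hne4 : ∀ v ∈ Ici (0:ℝ), a ^ 2 * v + 1 ≠ 0 := fun v hv => by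
      have h0 : (0:ℝ) ≤ v := hv
      have : (0:ℝ) ≤ a ^ 2 * v := mul_nonneg (sq_nonneg a) h0
      intro h; linarith
    have hsq : ContinuousOn Real.sqrt (Ici (0:ℝ)) := Real.continuous_sqrt.continuousOn
    refine (((((((continuousOn_const.mul
      ((Real.continuous_arctan.comp Real.continuous_sqrt).continuousOn)).add
      (continuousOn_const.mul (hsq.div (by fun_prop) hne1))).add
      (continuousOn_const.mul (hsq.div (by fun_prop) hne2))).add
      (continuousOn_const.mul (hsq.div (by fun_prop) hne3))).add
      (continuousOn_const.mul
        ((Real.continuous_arctan.comp (continuous_const.mul Real.continuous_sqrt)).continuousOn))).add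
      (continuousOn_const.mul
        ((Real.continuous_arctan.comp (continuous_const.mul Real.continuous_sqrt)).continuousOn))).add
      (continuousOn_const.mul (hsq.div (by fun_prop) hne4)))
  have hcont : ContinuousWithinAt F (Ici 0) 0 := hcO.continuousWithinAt self_mem_Ici
  -- derivative
  have hderiv : ∀ u ∈ Ioi (0:ℝ), HasDerivAt F (Gaux a b u) u := by
    rintro u hu
    have hu0 : (0:ℝ) < u := hu
    obtain ⟨s, hs0, rfl⟩ : ∃ s : ℝ, 0 < s ∧ s ^ 2 = u :=
      ⟨Real.sqrt u, Real.sqrt_pos.2 hu0, Real.sq_sqrt hu0.le⟩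
    have hsq : Real.sqrt (s ^ 2) = s := Real.sqrt_sq hs0.le
    have hs' : HasDerivAt Real.sqrt (1 / (2 * s)) (s ^ 2) := by
      simpa [hsq] using Real.hasDerivAt_sqrt (pow_ne_zero 2 hs0.ne')
    have hs1 : (0:ℝ) < s ^ 2 + 1 := by positivity
    have hsa : (0:ℝ) < a ^ 2 * s ^ 2 + 1 := by positivity
    have hsb : (0:ℝ) < b ^ 2 * s ^ 2 + 1 := by positivity
    have t1 : HasDerivAt (fun v : ℝ => arctan (Real.sqrt v))
        ((1 / (1 + s ^ 2)) * (1 / (2 * s))) (s ^ 2) := by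
      have := (Real.hasDerivAt_arctan (Real.sqrt (s ^ 2))).comp (s ^ 2) hs'
      simp [hsq, Function.comp] at this ⊢
      exact this
    have t2 : HasDerivAt (fun v : ℝ => Real.sqrt v / (v + 1))
        ((1 / (2 * s) * (s ^ 2 + 1) - s * 1) / (s ^ 2 + 1) ^ 2) (s ^ 2) := by
      have := hs'.div ((hasDerivAt_id (s ^ 2)).add_const 1) hs1.ne'
      simp [hsq] at this ⊢
      exact this
    have t3 : HasDerivAt (fun v : ℝ => Real.sqrt v / (v + 1) ^ 2)
        ((1 / (2 * s) * (s ^ 2 + 1) ^ 2 - s * ((2:ℕ) * (s ^ 2 + 1) ^ 1 * 1)) /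
          ((s ^ 2 + 1) ^ 2) ^ 2) (s ^ 2) := by
      have := hs'.div (((hasDerivAt_id (s ^ 2)).add_const 1).pow 2)
        (pow_ne_zero 2 hs1.ne')
      simp [hsq] at this ⊢
      exact this
    have t4 : HasDerivAt (fun v : ℝ => Real.sqrt v / (v + 1) ^ 3)
        ((1 / (2 * s) * (s ^ 2 + 1) ^ 3 - s * ((3:ℕ) * (s ^ 2 + 1) ^ 2 * 1)) /
          ((s ^ 2 + 1) ^ 3) ^ 2) (s ^ 2) := by
      have := hs'.div (((hasDerivAt_id (s ^ 2)).add_const 1).pow 3)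
        (pow_ne_zero 3 hs1.ne')
      simp [hsq] at this ⊢
      exact this
    have t5 : HasDerivAt (fun v : ℝ => arctan (a * Real.sqrt v))
        ((1 / (1 + (a * s) ^ 2)) * (a * (1 / (2 * s)))) (s ^ 2) := by
      have := (Real.hasDerivAt_arctan (a * Real.sqrt (s ^ 2))).comp (s ^ 2)
        (hs'.const_mul a)
      simp [hsq, Function.comp] at this ⊢
      exact this
    have t6 : HasDerivAt (fun v : ℝ => arctan (b * Real.sqrt v))
        ((1 / (1 + (b * s) ^ 2)) * (b * (1 / (2 * s)))) (s ^ 2) := by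
      have := (Real.hasDerivAt_arctan (b * Real.sqrt (s ^ 2))).comp (s ^ 2)
        (hs'.const_mul b)
      simp [hsq, Function.comp] at this ⊢
      exact this
    have t7 : HasDerivAt (fun v : ℝ => Real.sqrt v / (a ^ 2 * v + 1))
        ((1 / (2 * s) * (a ^ 2 * s ^ 2 + 1) - s * (a ^ 2 * 1)) /
          (a ^ 2 * s ^ 2 + 1) ^ 2) (s ^ 2) := by
      have := hs'.div (((hasDerivAt_id (s ^ 2)).const_mul (a ^ 2)).add_const 1) hsa.ne'
      simp [hsq] at this ⊢
      exact this
    have hsum := ((((((t1.const_mul A).add (t2.const_mul B)).add (t3.const_mul E)).add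
      (t4.const_mul G)).add (t5.const_mul C)).add (t6.const_mul D)).add (t7.const_mul P)
    refine hsum.congr_deriv ?_
    have key := H (s ^ 2)
    have h52 : ((s:ℝ) ^ 2) ^ ((5 : ℝ) / 2) = s ^ (5:ℕ) := by
      rw [← Real.rpow_natCast s 2, ← Real.rpow_natCast s 5,
        ← Real.rpow_mul hs0.le]
      norm_num
    have hzp : ((s:ℝ) ^ 2 + 1) ^ (-2 : ℤ) = ((s ^ 2 + 1) ^ 2)⁻¹ := by
      rw [zpow_neg]
      norm_num
    simp only [Gaux]
    rw [hzp, h52]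
    field_simp
    linear_combination ((1+s^2)*(1+s^2*a^2)*(1+s^2*b^2)) * key
  -- nonnegativity
  have hpos : ∀ u ∈ Ioi (0:ℝ), 0 ≤ Gaux a b u := by
    intro u hu
    have hu0 : (0:ℝ) < u := hu
    have h1 : (0:ℝ) ≤ (u + 1) ^ (-2 : ℤ) := zpow_nonneg (by linarith) _
    have h2 : (0:ℝ) ≤ (u * a ^ 2 + 1)⁻¹ := by
      have : (0:ℝ) ≤ u * a ^ 2 := mul_nonneg hu0.le (sq_nonneg a)
      have : (0:ℝ) < u * a ^ 2 + 1 := by linarith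
      positivity
    have h3 : (0:ℝ) ≤ (u * b ^ 2 + 1)⁻¹ := by
      have : (0:ℝ) ≤ u * b ^ 2 := mul_nonneg hu0.le (sq_nonneg b)
      have : (0:ℝ) < u * b ^ 2 + 1 := by linarith
      positivity
    have h4 : (0:ℝ) ≤ u ^ ((5:ℝ)/2) := Real.rpow_nonneg hu0.le _
    exact mul_nonneg (mul_nonneg (mul_nonneg h1 h2) h3) h4
  -- limit at infinity
  have htend : Tendsto F atTop (𝓝 (π/2*(A+C+D))) := by
    have l1 : Tendsto (fun v : ℝ => arctan (Real.sqrt v)) atTop (𝓝 (π / 2)) := by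
      have := tendsto_arctan_mul_sqrt 1 one_pos
      simpa using this
    have l2 := tendsto_sqrt_div_pow 1 one_ne_zero
    simp only [pow_one] at l2
    have l3 := tendsto_sqrt_div_pow 2 two_ne_zero
    have l4 := tendsto_sqrt_div_pow 3 three_ne_zero
    have l5 := tendsto_arctan_mul_sqrt a ha
    have l6 := tendsto_arctan_mul_sqrt b hb
    have l7 := tendsto_sqrt_div_linear (a ^ 2) (by positivity)
    have := ((((((l1.const_mul A).add (l2.const_mul B)).add (l3.const_mul E)).add
      (l4.const_mul G)).add (l5.const_mul C)).add (l6.const_mul D)).add (l7.const_mul P)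
    have heq : A * (π/2) + B * 0 + E * 0 + G * 0 + C * (π/2) + D * (π/2) + P * 0
        = π/2*(A+C+D) := by ring
    rw [heq] at this
    exact this
  have hF0 : F 0 = 0 := by
    rw [hFdef]
    norm_num
  constructor
  · exact integrableOn_Ioi_deriv_of_nonneg hcont hderiv hpos htend
  · have := integral_Ioi_of_hasDerivAt_of_nonneg hcont hderiv hpos htend
    rw [this, hF0, sub_zero]

private lemma sq_ne_sq' {a b : ℝ} (ha : 0 < a) (hb : 0 < b) (hab : a ≠ b) :
    a ^ 2 - b ^ 2 ≠ 0 := by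
  intro h
  have h' : (a - b) * (a + b) = 0 := by ring_nf; linarith
  rcases mul_eq_zero.1 h' with h1 | h2
  · exact hab (by linarith)
  · linarith

private lemma core1 (b : ℝ) (hb : 0 < b) :
    IntegrableOn (Gaux 1 b) (Ioi 0) ∧ ∫ u in Ioi (0:ℝ), Gaux 1 b u = Raux 1 b := by
  rcases eq_or_ne b 1 with rfl | hb1
  · obtain ⟨h1, h2⟩ := engine 1 1 (5/8) (-11/8) 0 0 (13/12) (-1/3) 0 one_pos one_pos
      (by intro u; ring)
    refine ⟨h1, ?_⟩
    rw [h2]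
    simp only [Raux]
    ring
  · have hb2 : b ^ 2 - 1 ≠ 0 := by simpa using sq_ne_sq' hb one_pos hb1
    have hbne : b ≠ 0 := hb.ne'
    obtain ⟨h1, h2⟩ := engine 1 b
      ((3*b^4 - 10*b^2 + 15)/(4*(b^2-1)^3))
      ((9 - 5*b^2)/(4*(b^2-1)^2))
      0
      (-2/(b*(b^2-1)^3))
      (1/(2*(b^2-1)))
      0 0 one_pos hb
      (by intro u; field_simp; ring)
    refine ⟨h1, ?_⟩
    rw [h2]
    simp only [Raux]
    have hb3 : b + 1 ≠ 0 := by intro h; linarith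
    have hb4 : (1:ℝ) + b ≠ 0 := by intro h; linarith
    field_simp
    ring

private lemma core (a b : ℝ) (ha : 0 < a) (hb : 0 < b) :
    IntegrableOn (Gaux a b) (Ioi 0) ∧ ∫ u in Ioi (0:ℝ), Gaux a b u = Raux a b := by
  have hane : a ≠ 0 := ha.ne'
  have hbne : b ≠ 0 := hb.ne'
  rcases eq_or_ne a 1 with rfl | ha1
  · exact core1 b hb
  · have ha2 : a ^ 2 - 1 ≠ 0 := by simpa using sq_ne_sq' ha one_pos ha1
    rcases eq_or_ne b 1 with rfl | hb1
    · obtain ⟨h1, h2⟩ := core1 a ha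
      have hfun : Gaux a 1 = Gaux 1 a := by
        funext u
        simp only [Gaux]
        ring
      have ha3 : a + 1 ≠ 0 := by intro h; linarith
      have ha4 : (1:ℝ) + a ≠ 0 := by intro h; linarith
      refine ⟨hfun ▸ h1, ?_⟩
      rw [hfun, h2]
      simp only [Raux]
      field_simp
      ring
    · have hb2 : b ^ 2 - 1 ≠ 0 := by simpa using sq_ne_sq' hb one_pos hb1
      have ha3 : a + 1 ≠ 0 := by intro h; linarith
      have hb3 : b + 1 ≠ 0 := by intro h; linarith
      rcases eq_or_ne a b with rfl | hab
      · obtain ⟨h1, h2⟩ := engine a a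
          ((a^2-5)/(a^2-1)^3)
          (-1/(a^2-1)^2)
          ((5*a^2-1)/(a^3*(a^2-1)^3))
          0 0 0
          (-1/(a^2*(a^2-1)^2))
          ha ha
          (by intro u; field_simp; ring)
        refine ⟨h1, ?_⟩
        rw [h2]
        simp only [Raux]
        have haa : a + a ≠ 0 := by intro h; linarith
        field_simp
        ring
      · have hab2 : a ^ 2 - b ^ 2 ≠ 0 := sq_ne_sq' ha hb hab
        have hba2 : b ^ 2 - a ^ 2 ≠ 0 := fun h => hab2 (by linarith)
        have habne : a + b ≠ 0 := by intro h; linarith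
        obtain ⟨h1, h2⟩ := engine a b
          ((a^2*b^2 - 3*a^2 - 3*b^2 + 5)/((a^2-1)^2*(b^2-1)^2))
          (-1/((a^2-1)*(b^2-1)))
          (-2/(a*(a^2-1)^2*(a^2-b^2)))
          (-2/(b*(b^2-1)^2*(b^2-a^2)))
          0 0 0 ha hb
          (by intro u; field_simp; ring)
        refine ⟨h1, ?_⟩
        rw [h2]
        simp only [Raux]
        field_simp
        ring

/-- For all reals `x, y > 0`, the integral
`H₂₁₁(x,y) = ∫₀^∞ (u+1)⁻² (ux+1)⁻¹ (uy+1)⁻¹ u^(5/2) du` converges and equals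
`π(√x(√y+2)² + x(√y+2) + 2(√y+1)²) / (2(√x+1)²√x(√y+1)²√y(√x+√y))`. -/
theorem H_two_one_one_eval (x y : ℝ) (hx : 0 < x) (hy : 0 < y) :
    IntegrableOn
      (fun u : ℝ =>
        (u + 1) ^ (-2 : ℤ) * (u * x + 1)⁻¹ * (u * y + 1)⁻¹ * u ^ ((5 : ℝ) / 2))
      (Set.Ioi 0) ∧
    ∫ u in Set.Ioi (0 : ℝ),
        (u + 1) ^ (-2 : ℤ) * (u * x + 1)⁻¹ * (u * y + 1)⁻¹ * u ^ ((5 : ℝ) / 2) =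
      Real.pi * (Real.sqrt x * (Real.sqrt y + 2) ^ 2 + x * (Real.sqrt y + 2) +
          2 * (Real.sqrt y + 1) ^ 2) /
        (2 * (Real.sqrt x + 1) ^ 2 * Real.sqrt x * (Real.sqrt y + 1) ^ 2 *
          Real.sqrt y * (Real.sqrt x + Real.sqrt y)) := by
  obtain ⟨a, ha, rfl⟩ : ∃ a : ℝ, 0 < a ∧ a ^ 2 = x :=
    ⟨Real.sqrt x, Real.sqrt_pos.2 hx, Real.sq_sqrt hx.le⟩
  obtain ⟨b, hb, rfl⟩ : ∃ b : ℝ, 0 < b ∧ b ^ 2 = y :=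
    ⟨Real.sqrt y, Real.sqrt_pos.2 hy, Real.sq_sqrt hy.le⟩
  simp only [Real.sqrt_sq ha.le, Real.sqrt_sq hb.le]
  exact core a b ha hb
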